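/- arXiv:1505.00972 — 4 statements merged into one kernel-verified Lean document; each statement's English description precedes it below -/
import Mathlib

section
/- Suppose real sequences ψₙ, ψ̃ₙ, τₙ, τ̃ₙ satisfy: all four entries of the 2×2 matrix diag(τₙ,1)·o(ψₙ) − o(ψ̃ₙ)·diag(1,τ̃ₙ) form ℓ² sequences, where o(φ) = [[sin φ, cos φ],[cos φ, −sin φ]]; and there is η > 0 with cos ψₙ ≥ η, cos ψ̃ₙ ≥ η, η ≤ τₙ ≤ 1/η, η ≤ τ̃ₙ ≤ 1/η for all n. Then the sequences {sin ψₙ − sin ψ̃ₙ} and {cos ψₙ − cos ψ̃ₙ} both belong to ℓ². -/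
private lemma L2_of_le {f g : ℕ → ℝ} {C : ℝ} (hg : Summable fun n => (g n)^2)
    (h : ∀ n, |f n| ≤ C * |g n|) : Summable fun n => (f n)^2 := by
  apply Summable.of_nonneg_of_le (fun n => sq_nonneg _) _ (hg.mul_left (C^2))
  intro n
  calc (f n)^2 = |f n|^2 := (sq_abs _).symm
    _ ≤ (C * |g n|)^2 := pow_le_pow_left₀ (abs_nonneg _) (h n) 2
    _ = C^2 * (g n)^2 := by rw [mul_pow, sq_abs]

private lemma L2_add {f g : ℕ → ℝ} (hf : Summable fun n => (f n)^2)
    (hg : Summable fun n => (g n)^2) : Summable fun n => (f n + g n)^2 := by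
  apply Summable.of_nonneg_of_le (fun n => sq_nonneg _) _ ((hf.add hg).mul_left 2)
  intro n
  have : (f n + g n)^2 ≤ 2 * ((f n)^2 + (g n)^2) := by nlinarith [sq_nonneg (f n - g n)]
  simpa using this

/-- Lemma 6.4 (sublemma): if all entries of
`diag(τₙ,1)·o(ψₙ) − o(ψ̃ₙ)·diag(1,τ̃ₙ)` form ℓ² sequences, where
`o(φ) = [[sin φ, cos φ],[cos φ, −sin φ]]`, and the a priori bounds
`cos ψₙ ≥ η`, `cos ψ̃ₙ ≥ η`, `η ≤ τₙ ≤ 1/η`, `η ≤ τ̃ₙ ≤ 1/η` hold for some `η > 0`,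
then `{sin ψₙ − sin ψ̃ₙ}` and `{cos ψₙ − cos ψ̃ₙ}` are ℓ². -/
theorem l2_angle_comparison (ψ ψ' τ τ' : ℕ → ℝ) (η : ℝ) (hη : 0 < η)
    (hcos : ∀ n, η ≤ Real.cos (ψ n)) (hcos' : ∀ n, η ≤ Real.cos (ψ' n))
    (hτl : ∀ n, η ≤ τ n) (hτu : ∀ n, τ n ≤ 1/η)
    (hτ'l : ∀ n, η ≤ τ' n) (hτ'u : ∀ n, τ' n ≤ 1/η)
    (hl2 : ∀ i j : Fin 2, Summable fun n : ℕ =>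
      ((!![τ n, 0; 0, 1] *
          !![Real.sin (ψ n), Real.cos (ψ n); Real.cos (ψ n), -Real.sin (ψ n)]
        - !![Real.sin (ψ' n), Real.cos (ψ' n); Real.cos (ψ' n), -Real.sin (ψ' n)] *
          !![1, 0; 0, τ' n]) i j)^2) :
    Summable (fun n : ℕ => (Real.sin (ψ n) - Real.sin (ψ' n))^2) ∧
    Summable (fun n : ℕ => (Real.cos (ψ n) - Real.cos (ψ' n))^2) := by
  have ha := hl2 0 0; have hb := hl2 0 1; have hc := hl2 1 0; have hd := hl2 1 1
  simp [Matrix.mul_fin_two, Matrix.sub_apply] at ha hb hc hd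
  -- ha : Summable fun n => (τ n * sin (ψ n) - sin (ψ' n))^2
  -- hb : Summable fun n => (τ n * cos (ψ n) - cos (ψ' n) * τ' n)^2
  -- hc : Summable fun n => (cos (ψ n) - cos (ψ' n))^2
  -- hd : Summable fun n => (-sin (ψ n) + sin (ψ' n) * τ' n)^2
  have hτabs : ∀ n, |τ n| ≤ 1/η := fun n => by
    rw [abs_of_pos (lt_of_lt_of_le hη (hτl n))]; exact hτu n
  have hτ'abs : ∀ n, |τ' n| ≤ 1/η := fun n => by
    rw [abs_of_pos (lt_of_lt_of_le hη (hτ'l n))]; exact hτ'u n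
  -- Step 1: (τ - τ') * cos ψ' ∈ ℓ²
  have h1 : Summable fun n => ((τ n - τ' n) * Real.cos (ψ' n))^2 := by
    have hτc : Summable fun n => (-τ n * (Real.cos (ψ n) - Real.cos (ψ' n)))^2 :=
      L2_of_le hc (fun n => by
        rw [abs_mul, abs_neg]
        exact mul_le_mul_of_nonneg_right (hτabs n) (abs_nonneg _))
    have := L2_add hb hτc
    exact this.congr (fun n => by ring)
  -- Step 2: τ - τ' ∈ ℓ²
  have h2 : Summable fun n => (τ n - τ' n)^2 :=
    L2_of_le h1 (fun n => by
      have hc0 : 0 < Real.cos (ψ' n) := lt_of_lt_of_le hη (hcos' n)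
      rw [abs_mul, abs_of_pos hc0]
      calc |τ n - τ' n| = |τ n - τ' n| * 1 := (mul_one _).symm
        _ ≤ |τ n - τ' n| * (Real.cos (ψ' n) / η) := by
            apply mul_le_mul_of_nonneg_left _ (abs_nonneg _)
            rw [le_div_iff₀ hη]; simpa using hcos' n
        _ = 1/η * (|τ n - τ' n| * Real.cos (ψ' n)) := by ring)
  -- Step 3: (τ τ' - 1) * sin ψ ∈ ℓ²
  have h3 : Summable fun n => ((τ n * τ' n - 1) * Real.sin (ψ n))^2 := by
    have hτ'a : Summable fun n => (τ' n * (τ n * Real.sin (ψ n) - Real.sin (ψ' n)))^2 :=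
      L2_of_le ha (fun n => by
        rw [abs_mul]
        exact mul_le_mul_of_nonneg_right (hτ'abs n) (abs_nonneg _))
    have := L2_add hτ'a hd
    exact this.congr (fun n => by ring)
  -- Step 4: (τ² - 1) * sin ψ ∈ ℓ²
  have h4 : Summable fun n => ((τ n ^ 2 - 1) * Real.sin (ψ n))^2 := by
    have hts : Summable fun n => (τ n * ((τ n - τ' n) * Real.sin (ψ n)))^2 := by
      apply L2_of_le h2 (C := 1/η)
      intro n
      rw [abs_mul, abs_mul]
      calc |τ n| * (|τ n - τ' n| * |Real.sin (ψ n)|)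
          ≤ (1/η) * (|τ n - τ' n| * 1) := by
            apply mul_le_mul (hτabs n) _ (by positivity) (by positivity)
            exact mul_le_mul_of_nonneg_left (abs_le_one_iff_mul_self_le_one.mpr
              (by nlinarith [Real.sin_sq_add_cos_sq (ψ n), sq_nonneg (Real.cos (ψ n))])) (abs_nonneg _)
        _ = 1/η * |τ n - τ' n| := by ring
    have := L2_add h3 hts
    exact this.congr (fun n => by ring)
  -- Step 5: (τ - 1) * sin ψ ∈ ℓ²
  have h5 : Summable fun n => ((τ n - 1) * Real.sin (ψ n))^2 :=
    L2_of_le h4 (fun n => by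
      rw [one_mul, abs_mul, abs_mul]
      apply mul_le_mul_of_nonneg_right _ (abs_nonneg _)
      have h0 : 0 < τ n := lt_of_lt_of_le hη (hτl n)
      have : |τ n - 1| ≤ |τ n - 1| * (τ n + 1) := by
        nlinarith [abs_nonneg (τ n - 1)]
      calc |τ n - 1| ≤ |τ n - 1| * (τ n + 1) := this
        _ = |(τ n - 1) * (τ n + 1)| := by
            rw [abs_mul, abs_of_pos (by linarith : (0:ℝ) < τ n + 1)]
        _ = |τ n ^ 2 - 1| := by ring_nf
      )
  -- Conclusion for sin
  have hsin : Summable fun n => (Real.sin (ψ n) - Real.sin (ψ' n))^2 := by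
    have hneg : Summable fun n => (-((τ n - 1) * Real.sin (ψ n)))^2 := by
      simpa [neg_sq] using h5
    have := L2_add ha hneg
    exact this.congr (fun n => by ring)
  exact ⟨hsin, hc⟩
end

section
/- Let Δ(x) = Σ_{j=1}^g λⱼ/(cⱼ − x) with λⱼ > 0 and c₁,…,c_g distinct reals, and let y be such that Δ⁻¹(y) = {x₁,…,x_g} consists of g distinct points, each different from all cⱼ. Then ∏_{k=1}^g Δ'(xₖ) = [∏_{k<j}(xₖ−xⱼ)²(cₖ−cⱼ)² / ∏_{k,j}(cₖ−xⱼ)²] · ∏_{k=1}^g λₖ. -/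
/-!
Over the common denominator `∏ⱼ (t - cⱼ)`, the numerator of `Σⱼ wⱼ / (t - cⱼ)` is a polynomial of
degree `< g`. It agrees with `y ∏ⱼ (t - cⱼ)` at the `g` distinct solutions `xₖ` of
`Σⱼ wⱼ / (t - cⱼ) = y`, hence equals `y (∏ⱼ (X - cⱼ) - ∏ₖ (X - xₖ))`. Evaluating this identity at
`cₘ` expresses each weight `wₘ` through the `xⱼ`, while dividing it by `X - xₖ` and evaluating at
`xₖ` gives the derivative `Σⱼ wⱼ / (xₖ - cⱼ)²`. Taking the product over all indices, the powers of
`y` cancel, up to the sign `(-1)^(g(g+1)) = 1`, and the products of differences over `j ≠ k` pair up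
into the squared Vandermonde products.
-/

open Polynomial Lagrange Finset

theorem prod_prod_sub_comm {R ι κ : Type*} [CommRing R] [Fintype ι] [Fintype κ]
    (u : ι → R) (v : κ → R) :
    ∏ i, ∏ j, (u i - v j) = (-1) ^ (Fintype.card ι * Fintype.card κ) * ∏ j, ∏ i, (v j - u i) := by
  rw [prod_comm]
  simp_rw [← neg_sub (v _) (u _), prod_neg, prod_mul_distrib, prod_const, card_univ, ← pow_mul]

theorem prod_prod_Ioi_sq_mul_sq {R ι : Type*} [CommRing R] [Fintype ι] [LinearOrder ι]
    [LocallyFiniteOrderTop ι] [LocallyFiniteOrderBot ι] [DecidableEq ι] (u v : ι → R) :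
    ∏ k, ∏ j ∈ Ioi k, (u k - u j) ^ 2 * (v k - v j) ^ 2
      = (∏ k, ∏ j ∈ univ.erase k, (u k - u j)) * ∏ k, ∏ j ∈ univ.erase k, (v k - v j) := by
  calc ∏ k, ∏ j ∈ Ioi k, (u k - u j) ^ 2 * (v k - v j) ^ 2
      = ∏ k, ∏ j ∈ Ioi k, ((u k - u j) * (v k - v j)) * ((u j - u k) * (v j - v k)) :=
        prod_congr rfl fun k _ => prod_congr rfl fun j _ => by ring
    _ = ∏ k, ∏ j ∈ {k}ᶜ, (u k - u j) * (v k - v j) := by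
        convert prod_prod_Ioi_mul_eq_prod_prod_off_diag fun a b => (u b - u a) * (v b - v a)
    _ = _ := by
      simp_rw [← prod_mul_distrib, compl_eq_univ_sdiff, sdiff_singleton_eq_erase]

section PartialFractions

variable {K ι : Type*} [Field K] [Fintype ι] [DecidableEq ι]

noncomputable def partialFractionNumerator (w c : ι → K) : K[X] :=
  ∑ j, C (w j) * nodal (univ.erase j) c

theorem eval_partialFractionNumerator_not_at_node {w c : ι → K} {t : K} (ht : ∀ j, t ≠ c j) :
    (partialFractionNumerator w c).eval t = (∑ j, w j / (t - c j)) * ∏ j, (t - c j) := by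
  simp only [partialFractionNumerator, eval_finsetSum, eval_mul, eval_C, eval_nodal, sum_mul]
  refine sum_congr rfl fun j _ => ?_
  rw [← mul_prod_erase univ (fun i => t - c i) (mem_univ j)]
  field_simp [sub_ne_zero.2 (ht j)]

theorem eval_partialFractionNumerator_at_node (w c : ι → K) (m : ι) :
    (partialFractionNumerator w c).eval (c m) = w m * ∏ i ∈ univ.erase m, (c m - c i) := by
  rw [partialFractionNumerator, eval_finsetSum, sum_eq_single m]
  · simp [eval_nodal]
  · intro j _ hjm
    rw [eval_mul, eval_nodal_at_node (mem_erase.2 ⟨Ne.symm hjm, mem_univ m⟩), mul_zero]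
  · simp

theorem degree_partialFractionNumerator_lt (w c : ι → K) :
    (partialFractionNumerator w c).degree < Fintype.card ι := by
  refine (degree_sum_le _ _).trans_lt ((Finset.sup_lt_iff (WithBot.bot_lt_coe _)).2 fun j _ => ?_)
  rw [← smul_eq_C_mul]
  refine (degree_smul_le _ _).trans_lt ?_
  rw [degree_nodal, ← card_univ]
  exact_mod_cast card_erase_lt_of_mem (mem_univ j)

theorem X_sub_C_mul_partialFractionNumerator (w c : ι → K) {a : K} (ha : ∀ j, a ≠ c j) :
    (X - C a) * partialFractionNumerator (fun j => w j / (a - c j)) c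
      = C (∑ j, w j / (a - c j)) * nodal univ c - partialFractionNumerator w c := by
  simp only [partialFractionNumerator, mul_sum, map_sum, sum_mul, ← sum_sub_distrib]
  refine sum_congr rfl fun j _ => ?_
  rw [nodal_eq_mul_nodal_erase (mem_univ j)]
  have hw : C (w j) = C (w j / (a - c j)) * (C a - C (c j)) := by
    rw [← map_sub, ← map_mul, div_mul_cancel₀ _ (sub_ne_zero.2 (ha j))]
  rw [hw]
  ring

theorem partialFractionNumerator_eq_of_roots {w c x : ι → K} {y : K}
    (hx : Function.Injective x) (hxc : ∀ k j, x k ≠ c j)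
    (hroots : ∀ k, ∑ j, w j / (x k - c j) = y) :
    partialFractionNumerator w c = C y * (nodal univ c - nodal univ x) := by
  refine eq_of_degree_sub_lt_of_eval_index_eq univ hx.injOn ?_ fun k _ => ?_
  · have hnodal : (nodal univ c - nodal univ x).degree < #(univ : Finset ι) := by
      rw [← degree_nodal (v := c)]
      exact degree_sub_lt_left (by rw [degree_nodal, degree_nodal]) nodal_ne_zero
        (by rw [nodal_monic.leadingCoeff, nodal_monic.leadingCoeff])
    refine (degree_sub_le _ _).trans_lt (max_lt ?_ ?_)
    · rw [card_univ]
      exact degree_partialFractionNumerator_lt w c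
    · rw [← smul_eq_C_mul]
      exact (degree_smul_le _ _).trans_lt hnodal
  · rw [eval_partialFractionNumerator_not_at_node (hxc k), hroots k, eval_mul, eval_C, eval_sub,
      eval_nodal_at_node (mem_univ k), sub_zero, eval_nodal]

theorem mul_prod_erase_sub_eq_of_roots {w c x : ι → K} {y : K}
    (hx : Function.Injective x) (hxc : ∀ k j, x k ≠ c j)
    (hroots : ∀ k, ∑ j, w j / (x k - c j) = y) (m : ι) :
    w m * ∏ i ∈ univ.erase m, (c m - c i) = -y * ∏ j, (c m - x j) := by
  have h := congrArg (eval (c m)) (partialFractionNumerator_eq_of_roots hx hxc hroots)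
  rw [eval_partialFractionNumerator_at_node, eval_mul, eval_C, eval_sub,
    eval_nodal_at_node (mem_univ m), eval_nodal] at h
  rw [h]
  ring

theorem sum_div_sq_mul_prod_sub_eq_of_roots {w c x : ι → K} {y : K}
    (hx : Function.Injective x) (hxc : ∀ k j, x k ≠ c j)
    (hroots : ∀ k, ∑ j, w j / (x k - c j) = y) (k : ι) :
    (∑ j, w j / (x k - c j) ^ 2) * ∏ j, (x k - c j) = y * ∏ i ∈ univ.erase k, (x k - x i) := by
  have hquot : partialFractionNumerator (fun j => w j / (x k - c j)) c
      = C y * nodal (univ.erase k) x := by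
    refine mul_left_cancel₀ (X_sub_C_ne_zero (x k)) ?_
    rw [X_sub_C_mul_partialFractionNumerator w c (hxc k), hroots k,
      partialFractionNumerator_eq_of_roots hx hxc hroots,
      nodal_eq_mul_nodal_erase (v := x) (mem_univ k)]
    ring
  have h := congrArg (eval (x k)) hquot
  rw [eval_partialFractionNumerator_not_at_node (hxc k), eval_mul, eval_C, eval_nodal] at h
  simpa only [div_div, ← sq] using h

theorem prod_sum_div_sq_eq_of_roots {w c x : ι → K} {y : K}
    (hx : Function.Injective x) (hxc : ∀ k j, x k ≠ c j)
    (hroots : ∀ k, ∑ j, w j / (x k - c j) = y) :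
    ∏ k, ∑ j, w j / (c j - x k) ^ 2
      = (∏ k, ∏ j ∈ univ.erase k, (x k - x j)) * (∏ k, ∏ j ∈ univ.erase k, (c k - c j)) /
          (∏ k, ∏ j, (c k - x j)) ^ 2 * ∏ k, w k := by
  have hW : ∏ k, ∏ j, (c k - x j) ≠ 0 :=
    prod_ne_zero_iff.2 fun k _ => prod_ne_zero_iff.2 fun j _ => sub_ne_zero.2 (hxc j k).symm
  have hderiv : (∏ k, ∑ j, w j / (c j - x k) ^ 2) * ∏ k, ∏ j, (x k - c j)
      = y ^ Fintype.card ι * ∏ k, ∏ i ∈ univ.erase k, (x k - x i) := by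
    simp_rw [← prod_mul_distrib, sub_sq_comm (c _),
      sum_div_sq_mul_prod_sub_eq_of_roots hx hxc hroots, prod_mul_distrib, prod_const, card_univ]
  have hres : (∏ k, w k) * ∏ k, ∏ i ∈ univ.erase k, (c k - c i)
      = (-y) ^ Fintype.card ι * ∏ k, ∏ j, (c k - x j) := by
    simp_rw [← prod_mul_distrib, mul_prod_erase_sub_eq_of_roots hx hxc hroots,
      prod_mul_distrib, prod_const, card_univ]
  have hsign : (-1 : K) ^ (Fintype.card ι * Fintype.card ι) * (-1) ^ Fintype.card ι = 1 := by
    rw [← pow_add, ← Nat.mul_succ, (Nat.even_mul_succ_self _).neg_one_pow]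
  rw [prod_prod_sub_comm] at hderiv
  rw [neg_pow] at hres
  rw [div_mul_eq_mul_div, eq_div_iff (pow_ne_zero 2 hW)]
  generalize ∏ k, ∑ j, w j / (c j - x k) ^ 2 = D at hderiv ⊢
  generalize ∏ k, ∏ j, (c k - x j) = W at hderiv hres ⊢
  generalize ∏ k, ∏ i ∈ univ.erase k, (x k - x i) = A at hderiv ⊢
  linear_combination ((-1) ^ Fintype.card ι * W) * hderiv - A * hres - D * W ^ 2 * hsign

end PartialFractions

theorem product_of_derivatives_general (g : ℕ) (x c lam : Fin g → ℝ) (y : ℝ)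
    (hx : Function.Injective x)
    (hxc : ∀ k j, x k ≠ c j)
    (hpre : ∀ t : ℝ, (∀ j, t ≠ c j) →
      ((∑ j : Fin g, lam j / (c j - t)) = y ↔ ∃ k, t = x k)) :
    (∏ k : Fin g, ∑ j : Fin g, lam j / (c j - x k)^2)
      = (∏ k : Fin g, ∏ j ∈ Finset.Ioi k, (x k - x j)^2 * (c k - c j)^2) /
          (∏ k : Fin g, ∏ j : Fin g, (c k - x j)^2) *
        ∏ k : Fin g, lam k := by
  have hroots : ∀ k, ∑ j, lam j / (x k - c j) = -y := fun k => by
    rw [← (hpre (x k) (hxc k)).2 ⟨k, rfl⟩, ← sum_neg_distrib]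
    exact sum_congr rfl fun j _ => by rw [← div_neg, neg_sub]
  simp_rw [prod_prod_Ioi_sq_mul_sq, prod_pow]
  exact prod_sum_div_sq_eq_of_roots hx hxc hroots

/-- Let `Δ(t) = Σⱼ λⱼ/(cⱼ − t)` with `λⱼ > 0` and distinct `cⱼ`, and let
`x₁,…,x_g` be `g` distinct points, distinct from all `cⱼ`, forming the full preimage
`Δ⁻¹(y)`. Then `∏ₖ Δ'(xₖ) = [∏_{k<j}(xₖ−xⱼ)²(cₖ−cⱼ)² / ∏_{k,j}(cₖ−xⱼ)²] · ∏ₖ λₖ`,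
where `Δ'(t) = Σⱼ λⱼ/(cⱼ−t)²`. -/
theorem product_of_derivatives (g : ℕ) (x c lam : Fin g → ℝ) (y : ℝ)
    (hlam : ∀ j, 0 < lam j)
    (hx : Function.Injective x) (hc : Function.Injective c)
    (hxc : ∀ k j, x k ≠ c j)
    (hpre : ∀ t : ℝ, (∀ j, t ≠ c j) →
      ((∑ j : Fin g, lam j / (c j - t)) = y ↔ ∃ k, t = x k)) :
    (∏ k : Fin g, ∑ j : Fin g, lam j / (c j - x k)^2)
      = (∏ k : Fin g, ∏ j ∈ Finset.Ioi k, (x k - x j)^2 * (c k - c j)^2) /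
          (∏ k : Fin g, ∏ j : Fin g, (c k - x j)^2) *
        ∏ k : Fin g, lam k :=
  product_of_derivatives_general g x c lam y hx hxc hpre
end

section
/- Let Δ(x) = Σ_{j=1}^g λⱼ/(cⱼ − x) with λⱼ > 0, c₁,…,c_g distinct reals, let y ∈ ℝ be such that the preimage Δ⁻¹(y) = {x₁,…,x_g} consists of g distinct points distinct from all cⱼ, let σ'(xₖ) ≥ 0 be given weights, and define the g×g matrix Ξ'(y) = Σ_{k=1}^g (σ'(xₖ)/Δ'(xₖ)) · W(xₖ)* W(xₖ), where W(x) is the row vector (1/(c₁−x), …, 1/(c_g−x)). Then det Ξ'(y) = ∏_{k=1}^g σ'(xₖ) / ∏_{k=1}^g λₖ. -/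
/-!
Let `A` be the Cauchy-type matrix `A k j = 1 / (c j - x k)`, so that
`Ξ'(y) = Aᵀ diag(σ'(xₖ) / Δ'(xₖ)) A`. The partial-fraction identity
`1 / ((c - a) (c - b)) = (1 / (c - a) - 1 / (c - b)) / (a - b)` makes distinct rows of `A`
orthogonal for the weights `λ` as soon as `Δ(a) = Δ(b)`, so on the level set `Δ⁻¹(y)` we get
`A diag(λ) Aᵀ = diag(Δ'(xₖ))`. Taking determinants, `det A ^ 2 * ∏ λ = ∏ Δ'(xₖ)`, and the factors
`Δ'(xₖ) > 0` cancel from `det Ξ'(y) = det A ^ 2 * ∏ σ' / ∏ Δ'(xₖ)`.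
-/

open Matrix Finset

section Field

variable {K ι κ : Type*} [Field K]

theorem Matrix.sum_smul_vecMulVec_eq_transpose_mul_diagonal_mul [Fintype κ] [DecidableEq κ]
    (d : κ → K) (u v : κ → ι → K) :
    ∑ k, d k • vecMulVec (u k) (v k) = (of u)ᵀ * diagonal d * of v := by
  ext i j
  simp only [sum_apply, smul_apply, vecMulVec_apply, mul_apply, transpose_apply, of_apply,
    diagonal_apply, mul_ite, mul_zero, sum_ite_eq', mem_univ, if_true, smul_eq_mul]
  exact sum_congr rfl fun k _ => by ring

theorem sum_one_div_sub_mul_mul_one_div_sub [Fintype ι] (lam c : ι → K) {a b : K} (hab : a ≠ b)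
    (ha : ∀ j, c j ≠ a) (hb : ∀ j, c j ≠ b) :
    ∑ j, 1 / (c j - a) * lam j * (1 / (c j - b))
      = (∑ j, lam j / (c j - a) - ∑ j, lam j / (c j - b)) / (a - b) := by
  rw [← sum_sub_distrib, sum_div]
  refine sum_congr rfl fun j _ => ?_
  have hja := sub_ne_zero.mpr (ha j)
  have hjb := sub_ne_zero.mpr (hb j)
  have hab' := sub_ne_zero.mpr hab
  field_simp
  ring

def cauchyMatrix (x : κ → K) (c : ι → K) : Matrix κ ι K :=
  of fun k j => 1 / (c j - x k)

theorem cauchyMatrix_mul_diagonal_mul_transpose [Fintype ι] [DecidableEq ι] [DecidableEq κ]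
    (lam c : ι → K) (x : κ → K) (y : K) (hx : Function.Injective x) (hxc : ∀ k j, x k ≠ c j)
    (hlevel : ∀ k, ∑ j, lam j / (c j - x k) = y) :
    cauchyMatrix x c * diagonal lam * (cauchyMatrix x c)ᵀ
      = diagonal fun k => ∑ j, lam j / (c j - x k) ^ 2 := by
  ext k l
  simp only [cauchyMatrix, mul_apply, diagonal_apply, transpose_apply, of_apply, mul_ite,
    mul_zero, sum_ite_eq', mem_univ, if_true]
  by_cases hkl : k = l
  · subst hkl
    rw [if_pos rfl]
    refine sum_congr rfl fun j _ => ?_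
    have := sub_ne_zero.mpr (hxc k j).symm
    field_simp
  · rw [if_neg hkl, sum_one_div_sub_mul_mul_one_div_sub lam c (hx.ne hkl)
      (fun j => (hxc k j).symm) (fun j => (hxc l j).symm), hlevel, hlevel, sub_self, zero_div]

theorem det_cauchyMatrix_sq_mul_prod [Fintype κ] [DecidableEq κ] (lam c x : κ → K) (y : K)
    (hx : Function.Injective x) (hxc : ∀ k j, x k ≠ c j)
    (hlevel : ∀ k, ∑ j, lam j / (c j - x k) = y) :
    (cauchyMatrix x c).det ^ 2 * ∏ k, lam k = ∏ k, ∑ j, lam j / (c j - x k) ^ 2 := by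
  have h := congrArg det (cauchyMatrix_mul_diagonal_mul_transpose lam c x y hx hxc hlevel)
  rw [det_mul, det_mul, det_transpose, det_diagonal, det_diagonal] at h
  rw [← h]
  ring

end Field

theorem sum_div_sub_sq_pos {ι : Type*} [Fintype ι] [Nonempty ι] (lam c : ι → ℝ)
    (hlam : ∀ j, 0 < lam j) {t : ℝ} (ht : ∀ j, t ≠ c j) :
    0 < ∑ j, lam j / (c j - t) ^ 2 :=
  sum_pos (fun j _ => div_pos (hlam j) (sq_pos_of_ne_zero (sub_ne_zero.mpr (ht j).symm)))
    univ_nonempty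

theorem density_determinant_general (g : ℕ) (x c lam σ' : Fin g → ℝ) (y : ℝ)
    (hlam : ∀ j, 0 < lam j)
    (hx : Function.Injective x)
    (hxc : ∀ k j, x k ≠ c j)
    (hpre : ∀ t : ℝ, (∀ j, t ≠ c j) →
      ((∑ j : Fin g, lam j / (c j - t)) = y ↔ ∃ k, t = x k)) :
    (∑ k : Fin g, (σ' k / ∑ j : Fin g, lam j / (c j - x k)^2) •
        Matrix.vecMulVec (fun j : Fin g => 1 / (c j - x k))
          (fun j : Fin g => 1 / (c j - x k))).det
      = (∏ k : Fin g, σ' k) / (∏ k : Fin g, lam k) := by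
  have hlevel (k : Fin g) : ∑ j, lam j / (c j - x k) = y := (hpre _ (hxc k)).mpr ⟨k, rfl⟩
  have hdet := det_cauchyMatrix_sq_mul_prod lam c x y hx hxc hlevel
  have hΔ' : ∏ k, ∑ j, lam j / (c j - x k) ^ 2 ≠ 0 :=
    prod_ne_zero_iff.mpr fun k _ =>
      have : Nonempty (Fin g) := ⟨k⟩
      (sum_div_sub_sq_pos lam c hlam (hxc k)).ne'
  have hlam' : ∏ k, lam k ≠ 0 := prod_ne_zero_iff.mpr fun k _ => (hlam k).ne'
  have hΞ : ∑ k, (σ' k / ∑ j, lam j / (c j - x k) ^ 2) •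
      vecMulVec (fun j => 1 / (c j - x k)) (fun j => 1 / (c j - x k))
      = (cauchyMatrix x c)ᵀ * diagonal (fun k => σ' k / ∑ j, lam j / (c j - x k) ^ 2)
        * cauchyMatrix x c :=
    sum_smul_vecMulVec_eq_transpose_mul_diagonal_mul _ _ _
  rw [hΞ, det_mul, det_mul, det_transpose, det_diagonal, prod_div_distrib]
  field_simp
  linear_combination (∏ k, σ' k) * hdet

/-- Lemma 5.4: with `Δ(t) = Σⱼ λⱼ/(cⱼ−t)`, `λⱼ > 0`, distinct poles `cⱼ`, and
`Δ⁻¹(y) = {x₁,…,x_g}` consisting of `g` distinct preimage points (distinct from the `cⱼ`),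
for nonnegative weights `σ'(xₖ)` the matrix
`Ξ'(y) = Σₖ (σ'(xₖ)/Δ'(xₖ)) W(xₖ)*W(xₖ)` with `W(x) = (1/(cⱼ−x))ⱼ` satisfies
`det Ξ'(y) = ∏ₖ σ'(xₖ) / ∏ₖ λₖ`. -/
theorem density_determinant (g : ℕ) (x c lam σ' : Fin g → ℝ) (y : ℝ)
    (hlam : ∀ j, 0 < lam j) (hσ : ∀ k, 0 ≤ σ' k)
    (hx : Function.Injective x) (hc : Function.Injective c)
    (hxc : ∀ k j, x k ≠ c j)
    (hpre : ∀ t : ℝ, (∀ j, t ≠ c j) →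
      ((∑ j : Fin g, lam j / (c j - t)) = y ↔ ∃ k, t = x k)) :
    (∑ k : Fin g, (σ' k / ∑ j : Fin g, lam j / (c j - x k)^2) •
        Matrix.vecMulVec (fun j : Fin g => 1 / (c j - x k))
          (fun j : Fin g => 1 / (c j - x k))).det
      = (∏ k : Fin g, σ' k) / (∏ k : Fin g, lam k) :=
  density_determinant_general g x c lam σ' y hlam hx hxc hpre
end

section
/- Let J be a bounded self-adjoint two-sided Jacobi matrix on ℓ²(ℤ) with off-diagonal entries a(n) > 0 and let c ∈ ℝ \ σ(J). Define κ_c = (J − c)⁻¹(e₋₁ a(0) sin φ + e₀ cos φ) where tan φ = r₊(c) and r₊(z) = ⟨(J₊ − z)⁻¹ e₀, e₀⟩ is the resolvent function of the restriction J₊ to ℓ²(ℤ≥0). Then ‖κ_c‖² = r₊'(c)/(1 + r₊(c)²) = φ'(c). -/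
/-!
The resolvent `R(t) = (J₊ - t)⁻¹` has derivative `R(t)²`, so `r'(c) = ⟪R(c)² e₀, e₀⟫`, which equals
`‖R(c) e₀‖²` because `R(c)` is self-adjoint. Multiplying by `cos² (arctan r(c)) = 1 / (1 + r(c)²)`
gives the norm of `κ_c`, and the same quotient is the derivative of `arctan ∘ r` by the chain rule.
-/

open scoped RealInnerProductSpace

theorem Ring.inverse_neg {R : Type*} [Ring R] (a : R) : Ring.inverse (-a) = -Ring.inverse a := by
  by_cases ha : IsUnit a
  · lift a to Rˣ using ha
    rw [← Units.val_neg, Ring.inverse_unit, Ring.inverse_unit, inv_neg, Units.val_neg]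
  · rw [Ring.inverse_non_unit _ ha, Ring.inverse_non_unit _ (mt (IsUnit.neg_iff a).mp ha), neg_zero]

theorem hasDerivAt_ringInverse_sub_smul_one {𝕜 A : Type*} [NontriviallyNormedField 𝕜] [NormedRing A]
    [NormedAlgebra 𝕜 A] [CompleteSpace A] {a : A} {c : 𝕜} (hc : IsUnit (a - c • 1)) :
    HasDerivAt (fun t : 𝕜 => Ring.inverse (a - t • 1)) (Ring.inverse (a - c • 1) ^ 2) c := by
  have inverse_eq_neg_resolvent (t : 𝕜) : Ring.inverse (a - t • 1) = -resolvent a t := by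
    rw [resolvent, Algebra.algebraMap_eq_smul_one, ← Ring.inverse_neg, neg_sub]
  have hres : c ∈ resolventSet 𝕜 a := by
    rw [spectrum.mem_resolventSet_iff, Algebra.algebraMap_eq_smul_one, ← neg_sub]
    exact hc.neg
  simp only [inverse_eq_neg_resolvent, neg_sq]
  exact (spectrum.hasDerivAt_resolvent_const_left hres).neg.congr_deriv (neg_neg _)

theorem IsSelfAdjoint.inner_sq_apply_self {H : Type*} [NormedAddCommGroup H] [InnerProductSpace ℝ H]
    [CompleteSpace H] {T : H →L[ℝ] H} (hT : IsSelfAdjoint T) (x : H) :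
    ⟪(T ^ 2) x, x⟫ = ‖T x‖ ^ 2 := by
  calc ⟪(T ^ 2) x, x⟫ = ⟪T (T x), x⟫ := rfl
    _ = ⟪T x, T x⟫ := hT.isSymmetric (T x) x
    _ = ‖T x‖ ^ 2 := real_inner_self_eq_norm_sq _

theorem HasDerivAt.inner_apply_self {H : Type*} [NormedAddCommGroup H] [InnerProductSpace ℝ H]
    {F : ℝ → H →L[ℝ] H} {F' : H →L[ℝ] H} {c : ℝ} (hF : HasDerivAt F F' c) (x : H) :
    HasDerivAt (fun t => ⟪F t x, x⟫) ⟪F' x, x⟫ c := by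
  simpa using (hF.clm_apply (hasDerivAt_const c x)).inner ℝ (hasDerivAt_const c x)

theorem defect_vector_norm_general {H : Type*} [NormedAddCommGroup H] [InnerProductSpace ℝ H]
    [CompleteSpace H]
    (Jp : H →L[ℝ] H) (hsa : IsSelfAdjoint Jp) (e0 : H)
    (c r' : ℝ) (hc : IsUnit (Jp - c • (1 : H →L[ℝ] H)))
    (r : ℝ → ℝ)
    (hr : ∀ t : ℝ, r t = ⟪(Ring.inverse (Jp - t • (1 : H →L[ℝ] H))) e0, e0⟫)
    (hder : HasDerivAt r r' c) :
    ‖Real.cos (Real.arctan (r c)) • (Ring.inverse (Jp - c • (1 : H →L[ℝ] H))) e0‖^2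
      = r' / (1 + (r c)^2) ∧
    HasDerivAt (fun t => Real.arctan (r t)) (r' / (1 + (r c)^2)) c := by
  set R := Ring.inverse (Jp - c • (1 : H →L[ℝ] H))
  have hR : IsSelfAdjoint R := (hsa.sub (.smul (.all c) (.one _))).ringInverse
  have hr' : r' = ‖R e0‖ ^ 2 := by
    have hrR : HasDerivAt r ⟪(R ^ 2) e0, e0⟫ c := by
      rw [funext hr]
      exact (hasDerivAt_ringInverse_sub_smul_one hc).inner_apply_self e0
    rw [hder.unique hrR, hR.inner_sq_apply_self]
  refine ⟨?_, by simpa only [one_div_mul_eq_div] using hder.arctan⟩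
  rw [norm_smul, mul_pow, Real.norm_eq_abs, sq_abs, Real.cos_sq_arctan, hr', one_div_mul_eq_div]

/-- Lemma 5.5 (norm of the defect vector): for a bounded self-adjoint half-line
operator `J₊`, a unit cyclic vector `e₀`, `c` in the resolvent set, the resolvent
function `r(t) = ⟨(J₊ − t)⁻¹e₀, e₀⟩` with derivative `r'` at `c`, and
`φ = arctan r(c)`, the vector `κ_c = cos φ · (J₊ − c)⁻¹ e₀` satisfies
`‖κ_c‖² = r'(c)/(1 + r(c)²) = φ'(c)`. -/
theorem defect_vector_norm {H : Type*} [NormedAddCommGroup H] [InnerProductSpace ℝ H]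
    [CompleteSpace H]
    (Jp : H →L[ℝ] H) (hsa : IsSelfAdjoint Jp) (e0 : H) (he0 : ‖e0‖ = 1)
    (c r' : ℝ) (hc : IsUnit (Jp - c • (1 : H →L[ℝ] H)))
    (r : ℝ → ℝ)
    (hr : ∀ t : ℝ, r t = ⟪(Ring.inverse (Jp - t • (1 : H →L[ℝ] H))) e0, e0⟫)
    (hder : HasDerivAt r r' c) :
    ‖Real.cos (Real.arctan (r c)) • (Ring.inverse (Jp - c • (1 : H →L[ℝ] H))) e0‖^2
      = r' / (1 + (r c)^2) ∧
    HasDerivAt (fun t => Real.arctan (r t)) (r' / (1 + (r c)^2)) c :=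
  defect_vector_norm_general Jp hsa e0 c r' hc r hr hder
end
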